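/- arXiv:0801.2336 — 2 statements merged into one kernel-verified Lean document; each statement's English description precedes it below -/
import Mathlib

section
/- For any weighted graph and any finite sets A ⊂ B ⊂ Γ, the smallest Dirichlet eigenvalue λ(B) of −Δ on B, the resistance ρ(A, Γ∖B), and the measure μ(A) satisfy λ(B) · ρ(A, Γ∖B) · μ(A) ≤ 1. -/
open scoped ENNReal Classical BigOperators

/-- A weighted graph: symmetric nonnegative edge weights, no loops. -/
structure WGraph (V : Type) where
  w : V → V → ℝ
  symm : ∀ x y, w x y = w y x
  nonneg : ∀ x y, 0 ≤ w x y
  loopless : ∀ x, w x x = 0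

namespace WGraph

variable {V : Type} (G : WGraph V)

/-- The underlying simple graph: `x ∼ y` iff `w x y > 0`. -/
def toSimpleGraph : SimpleGraph V where
  Adj x y := x ≠ y ∧ 0 < G.w x y
  symm := ⟨fun x y h => ⟨h.1.symm, G.symm x y ▸ h.2⟩⟩
  loopless := ⟨fun x h => h.1 rfl⟩

def Adj (x y : V) : Prop := G.toSimpleGraph.Adj x y

/-- Shortest-path graph distance. -/
noncomputable def dist (x y : V) : ℕ := G.toSimpleGraph.dist x y

/-- Vertex measure `μ(x) = Σ_{y} w x y`. -/
noncomputable def mu (x : V) : ℝ≥0∞ := ∑' y, ENNReal.ofReal (G.w x y)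

/-- Measure of a set of vertices. -/
noncomputable def muSet (A : Set V) : ℝ≥0∞ := ∑' y : A, G.mu (y : V)

/-- Open ball of radius `R`. -/
def ball (x : V) (R : ℝ) : Set V := {y | (G.dist x y : ℝ) < R}

/-- Sphere of radius `R`. -/
def sphere (x : V) (R : ℝ) : Set V := {y | (G.dist x y : ℝ) = R}

/-- External boundary of a set. -/
def extBoundary (A : Set V) : Set V := {y | y ∉ A ∧ ∃ z ∈ A, G.Adj z y}

/-- Volume `V(x,R) = μ(B(x,R))`. -/
noncomputable def vol (x : V) (R : ℝ) : ℝ≥0∞ := G.muSet (G.ball x R)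

/-- Annulus volume `v(x,r,R) = V(x,R) - V(x,r)`. -/
noncomputable def annv (x : V) (r R : ℝ) : ℝ≥0∞ := G.vol x R - G.vol x r

/-- Transition kernel `P(x,y) = w x y / μ(x)`. -/
noncomputable def kernel (x y : V) : ℝ≥0∞ := ENNReal.ofReal (G.w x y) / G.mu x

/-- Iterates of the kernel killed outside `A`. -/
noncomputable def killedP (A : Set V) : ℕ → V → V → ℝ≥0∞
  | 0, x, y => if x = y ∧ x ∈ A then 1 else 0
  | n + 1, x, y =>
      ∑' z, killedP A n x z * (if z ∈ A ∧ y ∈ A then G.kernel z y else 0)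

/-- Green function of the walk killed on exiting `A`. -/
noncomputable def green (A : Set V) (x y : V) : ℝ≥0∞ := ∑' n, G.killedP A n x y

/-- Green kernel `g^A(x,y) = G^A(x,y)/μ(y)`. -/
noncomputable def greenK (A : Set V) (x y : V) : ℝ≥0∞ := G.green A x y / G.mu y

/-- Mean exit time from `A` started at `x`: `E_x(T_A) = Σ_y G^A(x,y)`. -/
noncomputable def exitE (A : Set V) (x : V) : ℝ≥0∞ := ∑' y, G.green A x y

/-- `E(x,R)`: mean exit time from the ball `B(x,R)` started at its center. -/
noncomputable def E (x : V) (R : ℝ) : ℝ≥0∞ := G.exitE (G.ball x R) x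

/-- Maximal mean exit time `Ē(x,R)`. -/
noncomputable def Ebar (x : V) (R : ℝ) : ℝ≥0∞ :=
  ⨆ z ∈ G.ball x R, G.exitE (G.ball x R) z

/-- Dirichlet energy `(-Δ f, f)_μ = (1/2) Σ_{x,y} w x y (f x - f y)²`. -/
noncomputable def energy (f : V → ℝ) : ℝ≥0∞ :=
  (∑' p : V × V, ENNReal.ofReal (G.w p.1 p.2 * (f p.1 - f p.2) ^ 2)) / 2

/-- Capacity between `A` and `B`. -/
noncomputable def capacity (A B : Set V) : ℝ≥0∞ :=
  ⨅ (f : V → ℝ) (_ : (∀ x ∈ A, f x = 1) ∧ (∀ x ∈ B, f x = 0)), G.energy f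

/-- Effective resistance `ρ(A,B)`. -/
noncomputable def resistance (A B : Set V) : ℝ≥0∞ := (G.capacity A B)⁻¹

/-- Annulus resistance `ρ(x,r,R)`. -/
noncomputable def rho (x : V) (r R : ℝ) : ℝ≥0∞ :=
  G.resistance (G.ball x r) (G.ball x R)ᶜ

/-- `‖f‖²_μ`. -/
noncomputable def norm2 (f : V → ℝ) : ℝ≥0∞ :=
  ∑' x, ENNReal.ofReal ((f x) ^ 2) * G.mu x

/-- Smallest Dirichlet eigenvalue of `-Δ` on `A` (Rayleigh quotient). -/
noncomputable def lam (A : Set V) : ℝ≥0∞ :=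
  ⨅ (f : V → ℝ) (_ : (∀ x, x ∉ A → f x = 0) ∧ f ≠ 0), G.energy f / G.norm2 f

/-- Condition `(p₀)`: controlled weights. -/
def P0 (p : ℝ) : Prop :=
  ∀ x y, G.Adj x y → ENNReal.ofReal p * G.mu x ≤ ENNReal.ofReal (G.w x y)

/-- Volume doubling. -/
def VD (D : ℝ) : Prop :=
  ∀ x : V, ∀ R : ℝ, 0 < R → G.vol x (2 * R) ≤ ENNReal.ofReal D * G.vol x R

/-- Time comparison principle. -/
def TC (C : ℝ) : Prop :=
  ∀ x : V, ∀ R : ℝ, 0 < R → ∀ y ∈ G.ball x R,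
    G.E x (2 * R) ≤ ENNReal.ofReal C * G.E y R

/-- Time doubling. -/
def TD (D : ℝ) : Prop :=
  ∀ x : V, ∀ R : ℝ, 0 < R → G.E x (2 * R) ≤ ENNReal.ofReal D * G.E x R

/-- Weak time comparison. -/
def WTC (C : ℝ) : Prop :=
  ∀ x : V, ∀ R : ℝ, 0 < R → ∀ y ∈ G.ball x R,
    G.E x R ≤ ENNReal.ofReal C * G.E y R

/-- Weak volume comparison. -/
def WVC (C : ℝ) : Prop :=
  ∀ x : V, ∀ R : ℝ, 0 < R → ∀ y ∈ G.ball x R,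
    G.vol x R ≤ ENNReal.ofReal C * G.vol y R

/-- Bounded covering condition. -/
def BC (K : ℕ) : Prop :=
  ∀ x : V, ∀ R : ℝ, 0 < R → ∃ s : Finset V, s.card ≤ K ∧
    G.ball x (2 * R) ⊆ ⋃ y ∈ s, G.ball y R

end WGraph

/-!
A function `f` with `f = 1` on `A` and `f = 0` off `B` is a test function for `λ(B)`, so
`λ(B) ‖f‖² ≤ (-Δf, f)`, while `‖f‖² ≥ μ(A)`. Taking the infimum over such `f` gives
`λ(B) μ(A) ≤ cap(A, Γ∖B) = ρ(A, Γ∖B)⁻¹`.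
-/

namespace WGraph

variable {V : Type} (G : WGraph V)

theorem lam_mul_norm2_le_energy {B : Set V} {f : V → ℝ} (hf : ∀ x, x ∉ B → f x = 0) :
    G.lam B * G.norm2 f ≤ G.energy f := by
  rcases eq_or_ne f 0 with rfl | hf₀
  · simp [norm2]
  calc G.lam B * G.norm2 f ≤ G.energy f / G.norm2 f * G.norm2 f :=
        mul_le_mul_left (iInf₂_le f ⟨hf, hf₀⟩) _
    _ = G.norm2 f * (G.energy f / G.norm2 f) := mul_comm _ _
    _ ≤ G.energy f := ENNReal.mul_div_le

theorem muSet_le_norm2 {A : Set V} {f : V → ℝ} (hf : ∀ x ∈ A, f x = 1) :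
    G.muSet A ≤ G.norm2 f :=
  calc G.muSet A = ∑' y : A, ENNReal.ofReal (f y ^ 2) * G.mu y :=
        tsum_congr fun y => by simp [hf y y.2]
    _ ≤ G.norm2 f := ENNReal.tsum_comp_le_tsum_of_injective Subtype.val_injective _

theorem lam_mul_muSet_le_capacity (A B : Set V) :
    G.lam B * G.muSet A ≤ G.capacity A Bᶜ :=
  le_iInf₂ fun _ hf =>
    (mul_le_mul_right (G.muSet_le_norm2 hf.1) _).trans
      (G.lam_mul_norm2_le_energy hf.2)

end WGraph

theorem stmt5_general (V : Type) (G : WGraph V) (A B : Set V) :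
    G.lam B * G.resistance A Bᶜ * G.muSet A ≤ 1 :=
  calc G.lam B * G.resistance A Bᶜ * G.muSet A
        = G.lam B * G.muSet A * (G.capacity A Bᶜ)⁻¹ := by rw [WGraph.resistance]; ring
    _ ≤ G.capacity A Bᶜ * (G.capacity A Bᶜ)⁻¹ :=
        mul_le_mul_left (G.lam_mul_muSet_le_capacity A B) _
    _ ≤ 1 := ENNReal.mul_inv_le_one _

/-- `λ(B) · ρ(A, Γ∖B) · μ(A) ≤ 1` for finite `A ⊆ B`. -/
theorem stmt5 (V : Type) (G : WGraph V) (A B : Set V)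
    (hA : A.Finite) (hB : B.Finite) (hAB : A ⊆ B) :
    G.lam B * G.resistance A Bᶜ * G.muSet A ≤ 1 :=
  stmt5_general V G A B
end

section
/- If (p₀) and volume doubling (VD) hold, then there is c > 0 such that λ^{−1}(x,R) ≥ c R² for all x ∈ Γ and R > 0, where λ(x,R) is the smallest Dirichlet eigenvalue of −Δ on B(x,R). -/
open scoped ENNReal Classical BigOperators

/-!
The tent function `y ↦ (R - d(x, y))₊` is supported in `B(x, R)`, changes by at most `1` along
edges, and is at least `R / 2` on `B(x, R / 2)`. Its Dirichlet energy is therefore at most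
`V(x, R)` and its squared norm at least `(R / 2)² V(x, R / 2)`, so its Rayleigh quotient, and
with it `λ(x, R)`, is at most `V(x, R) / ((R / 2)² V(x, R / 2)) ≤ 4 D / R²` by volume doubling.
-/

namespace WGraph

variable {V : Type} (G : WGraph V)

lemma abs_dist_sub_dist_le_one_of_adj (x : V) {y z : V} (h : G.Adj y z) :
    |(G.dist x y : ℝ) - G.dist x z| ≤ 1 := by
  have hyz : G.dist x z ≤ G.dist x y + 1 ∧ G.dist x y ≤ G.dist x z + 1 := by
    rcases SimpleGraph.Adj.diff_dist_adj (u := x) h with h' | h' | h' <;>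
      simp only [dist, h'] <;> omega
  rw [abs_le]
  constructor <;> linarith [(by exact_mod_cast hyz.1 : (G.dist x z : ℝ) ≤ G.dist x y + 1),
    (by exact_mod_cast hyz.2 : (G.dist x y : ℝ) ≤ G.dist x z + 1)]

lemma adj_of_pos_w {y z : V} (h : 0 < G.w y z) : G.Adj y z :=
  ⟨by rintro rfl; exact h.ne' (G.loopless y), h⟩

lemma tsum_ite_fst_mem_eq_muSet (A : Set V) :
    ∑' p : V × V, (if p.1 ∈ A then ENNReal.ofReal (G.w p.1 p.2) else 0) = G.muSet A := by
  rw [ENNReal.tsum_prod (f := fun a b => if a ∈ A then ENNReal.ofReal (G.w a b) else 0), muSet,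
    tsum_subtype A G.mu]
  refine tsum_congr fun a => ?_
  by_cases ha : a ∈ A
  · simp only [if_pos ha, Set.indicator_of_mem ha, mu]
  · simp only [if_neg ha, Set.indicator_of_notMem ha, tsum_zero]

lemma tsum_ite_snd_mem_eq_muSet (A : Set V) :
    ∑' p : V × V, (if p.2 ∈ A then ENNReal.ofReal (G.w p.1 p.2) else 0) = G.muSet A := by
  rw [← G.tsum_ite_fst_mem_eq_muSet A, ← (Equiv.prodComm V V).tsum_eq]
  simp only [Equiv.prodComm_apply, Prod.fst_swap, Prod.snd_swap, G.symm]

/-- An edge carrying a `1`-Lipschitz function supported in `A` has an endpoint in `A`, so its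
contribution to the energy is charged to the measure of that endpoint. -/
lemma energy_le_muSet {A : Set V} {f : V → ℝ} (hf : ∀ y, y ∉ A → f y = 0)
    (hLip : ∀ y z, G.Adj y z → (f y - f z) ^ 2 ≤ 1) : G.energy f ≤ G.muSet A := by
  refine ENNReal.div_le_of_le_mul' ?_
  rw [two_mul]
  nth_rw 1 [← G.tsum_ite_fst_mem_eq_muSet A]
  rw [← G.tsum_ite_snd_mem_eq_muSet A, ← ENNReal.tsum_add]
  refine ENNReal.tsum_le_tsum fun ⟨y, z⟩ => ?_
  rcases (G.nonneg y z).eq_or_lt with hw | hw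
  · simp [← hw]
  have hedge : ENNReal.ofReal (G.w y z * (f y - f z) ^ 2) ≤ ENNReal.ofReal (G.w y z) :=
    ENNReal.ofReal_le_ofReal (mul_le_of_le_one_right hw.le (hLip y z (G.adj_of_pos_w hw)))
  by_cases hy : y ∈ A
  · simpa [hy] using hedge.trans le_self_add
  by_cases hz : z ∈ A
  · simpa [hz] using hedge.trans le_add_self
  simp [hf y hy, hf z hz]

lemma ofReal_mul_muSet_le_norm2 {A : Set V} {f : V → ℝ} {c : ℝ} (hf : ∀ y ∈ A, c ≤ f y ^ 2) :
    ENNReal.ofReal c * G.muSet A ≤ G.norm2 f := by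
  rw [muSet, ← ENNReal.tsum_mul_left, tsum_subtype A fun y => ENNReal.ofReal c * G.mu y, norm2]
  refine ENNReal.tsum_le_tsum fun y => ?_
  by_cases hy : y ∈ A
  · rw [Set.indicator_of_mem hy]
    gcongr
    exact hf y hy
  · rw [Set.indicator_of_notMem hy]
    exact zero_le

lemma lam_le_energy_div_norm2 {A : Set V} {f : V → ℝ} (hf : ∀ y, y ∉ A → f y = 0)
    (hf0 : f ≠ 0) : G.lam A ≤ G.energy f / G.norm2 f :=
  iInf₂_le f ⟨hf, hf0⟩

noncomputable def tent (x : V) (R : ℝ) (y : V) : ℝ := max (R - G.dist x y) 0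

lemma tent_self (x : V) {R : ℝ} (hR : 0 ≤ R) : G.tent x R x = R := by
  simp [tent, dist, hR]

lemma tent_eq_zero_of_notMem_ball {x y : V} {R : ℝ} (hy : y ∉ G.ball x R) : G.tent x R y = 0 :=
  max_eq_right (by simpa [ball] using hy)

lemma sq_tent_sub_tent_le_one (x : V) (R : ℝ) {y z : V} (h : G.Adj y z) :
    (G.tent x R y - G.tent x R z) ^ 2 ≤ 1 := by
  have h1 : |G.tent x R y - G.tent x R z| ≤ 1 :=
    (abs_max_sub_max_le_abs _ _ _).trans <| by
      rw [sub_sub_sub_cancel_left, abs_sub_comm]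
      exact G.abs_dist_sub_dist_le_one_of_adj x h
  nlinarith [sq_abs (G.tent x R y - G.tent x R z), abs_nonneg (G.tent x R y - G.tent x R z)]

lemma half_le_tent {x y : V} {R : ℝ} (hy : y ∈ G.ball x (R / 2)) : R / 2 ≤ G.tent x R y := by
  have : (G.dist x y : ℝ) < R / 2 := hy
  exact le_max_of_le_left (by linarith)

lemma lam_ball_le_of_VD {D : ℝ} (hVD : G.VD D) (x : V) {R : ℝ} (hR : 0 < R) :
    G.lam (G.ball x R) ≤ ENNReal.ofReal (4 * D / R ^ 2) := by
  have hc : ENNReal.ofReal ((R / 2) ^ 2) ≠ 0 := by positivity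
  have hdoubling : G.vol x R ≤ ENNReal.ofReal D * G.vol x (R / 2) := by
    simpa [mul_div_cancel₀] using hVD x (R / 2) (by positivity)
  have henergy : G.energy (G.tent x R) ≤ G.vol x R :=
    G.energy_le_muSet (fun _ => G.tent_eq_zero_of_notMem_ball) fun _ _ =>
      G.sq_tent_sub_tent_le_one x R
  have hnorm : ENNReal.ofReal ((R / 2) ^ 2) * G.vol x (R / 2) ≤ G.norm2 (G.tent x R) :=
    G.ofReal_mul_muSet_le_norm2 fun _ hy =>
      pow_le_pow_left₀ (by positivity) (G.half_le_tent hy) 2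
  have htent : G.tent x R ≠ 0 := fun h => hR.ne' ((G.tent_self x hR.le).symm.trans (congrFun h x))
  calc G.lam (G.ball x R) ≤ G.energy (G.tent x R) / G.norm2 (G.tent x R) :=
        G.lam_le_energy_div_norm2 (fun _ => G.tent_eq_zero_of_notMem_ball) htent
    _ ≤ ENNReal.ofReal D / ENNReal.ofReal ((R / 2) ^ 2) := by
        refine ENNReal.div_le_of_le_mul ?_
        calc G.energy (G.tent x R)
            ≤ ENNReal.ofReal D / ENNReal.ofReal ((R / 2) ^ 2) *
                (ENNReal.ofReal ((R / 2) ^ 2) * G.vol x (R / 2)) := by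
              rw [← mul_assoc, ENNReal.div_mul_cancel hc ENNReal.ofReal_ne_top]
              exact henergy.trans hdoubling
          _ ≤ _ := by gcongr
    _ = ENNReal.ofReal (4 * D / R ^ 2) := by
        rw [← ENNReal.ofReal_div_of_pos (by positivity)]
        congr 1
        ring

end WGraph

theorem stmt17_general (V : Type) (G : WGraph V)
    (hVD : ∃ D : ℝ, 0 < D ∧ G.VD D) :
    ∃ c : ℝ, 0 < c ∧ ∀ (x : V) (R : ℝ), 0 < R →
      ENNReal.ofReal (c * R ^ 2) ≤ (G.lam (G.ball x R))⁻¹ := by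
  obtain ⟨D, hD, hVD⟩ := hVD
  refine ⟨1 / (4 * D), by positivity, fun x R hR => ?_⟩
  calc ENNReal.ofReal (1 / (4 * D) * R ^ 2) = (ENNReal.ofReal (4 * D / R ^ 2))⁻¹ := by
        rw [← ENNReal.ofReal_inv_of_pos (by positivity)]
        congr 1
        field_simp
    _ ≤ (G.lam (G.ball x R))⁻¹ := ENNReal.inv_le_inv.mpr (G.lam_ball_le_of_VD hVD x hR)

/-- `(p₀)+(VD)` imply `λ⁻¹(x,R) ≥ c R²`. -/
theorem stmt17 (V : Type) [Infinite V] (G : WGraph V)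
    (hconn : G.toSimpleGraph.Connected)
    (p₀ : ℝ) (hp : 0 < p₀) (h0 : G.P0 p₀)
    (hVD : ∃ D : ℝ, 0 < D ∧ G.VD D) :
    ∃ c : ℝ, 0 < c ∧ ∀ (x : V) (R : ℝ), 0 < R →
      ENNReal.ofReal (c * R ^ 2) ≤ (G.lam (G.ball x R))⁻¹ :=
  stmt17_general V G hVD
end
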